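/- arXiv:2303.12387 — 2 statements merged into one kernel-verified Lean document; each statement's English description precedes it below -/
import Mathlib

section
/- The number of distinct pairs (t, p) arising as (threshold, period) of an element of T_n equals ∑_{k=1}^{n} s(k), where s(k) is the number of distinct orders of elements in the symmetric group S_k. -/
/-- `t` and `p` are the threshold and period of `x`: the least values with `p > 0`
and `x ^ (t + p) = x ^ t`. -/
def IsThresholdPeriod {M : Type*} [Monoid M] (x : M) (t p : ℕ) : Prop :=
  0 < p ∧ x ^ (t + p) = x ^ t ∧
    (∀ t' p' : ℕ, 0 < p' → x ^ (t' + p') = x ^ t' → t ≤ t') ∧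
    (∀ p' : ℕ, 0 < p' → x ^ (t + p') = x ^ t → p ≤ p')

/-- The number of distinct orders of elements of the symmetric group on k points. -/
noncomputable def numOrders (k : ℕ) : ℕ :=
  (Finset.univ.image fun g : Equiv.Perm (Fin k) => orderOf g).card

/-!
Let `f ∈ T_n` have threshold `t` and period `p`. The ranges of `f⁰, f¹, …, fᵗ` strictly
decrease: once two consecutive ranges agree all later ones do, and then `fᵖ`, which fixes
`range fᵗ` pointwise, would fix `range fⁱ` for some `i < t`. Hence `t + |range fᵗ| ≤ n`,
and `t < n`. On `range fᵗ` the map `f` is a permutation of order `p`, which embeds into `S_{n-t}`.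
Conversely, a permutation `g` of `n - t` points with a path of length `t` descending into them
has threshold `t` and period `ord g`. So the pairs are the `(t, ord g)` with `t < n` and
`g ∈ S_{n-t}`, and there are `∑_{t<n} s(n - t)` of them.
-/

open Function Set

namespace Function

variable {α : Type*}

lemma mapsTo_range_iterate (f : α → α) (n : ℕ) : MapsTo f (range f^[n]) (range f^[n]) := by
  rintro _ ⟨x, rfl⟩
  exact ⟨f x, by rw [← iterate_succ_apply, iterate_succ_apply']⟩

lemma range_iterate_add_eq_of_succ_eq {f : α → α} {i : ℕ}
    (h : range f^[i + 1] = range f^[i]) (j : ℕ) : range f^[i + j] = range f^[i] := by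
  induction j with
  | zero => rfl
  | succ j ih =>
    rw [← add_assoc, iterate_succ', range_comp, ih, ← range_comp, ← iterate_succ', h]

lemma lt_of_forall_isPeriodicPt {f : α → α} {t m s : ℕ} {x : α} (hm : 0 < m)
    (h : ∀ y ∈ range f^[t], IsPeriodicPt f m y) (hx : f^[s] x ∉ periodicPts f) : s < t := by
  by_contra! hts
  refine hx (mk_mem_periodicPts hm (h _ ⟨f^[s - t] x, ?_⟩))
  rw [← iterate_add_apply, Nat.add_sub_cancel' hts]

lemma iterate_add_eq_iterate_iff (f : α → α) (t m : ℕ) :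
    f^[t + m] = f^[t] ↔ ∀ y ∈ range f^[t], IsPeriodicPt f m y := by
  rw [funext_iff, forall_mem_range, add_comm]
  simp only [iterate_add_apply, IsPeriodicPt, IsFixedPt]

def restrictRangeIterate (f : α → α) (t : ℕ) : Function.End (range f^[t]) :=
  (mapsTo_range_iterate f t).restrict

lemma restrictRangeIterate_pow_apply (f : α → α) (t m : ℕ) (y : range f^[t]) :
    ((restrictRangeIterate f t ^ m) y : α) = f^[m] y :=
  MapsTo.coe_iterate_restrict _ y m

lemma restrictRangeIterate_pow_eq_one_iff (f : α → α) (t m : ℕ) :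
    restrictRangeIterate f t ^ m = 1 ↔ ∀ y ∈ range f^[t], IsPeriodicPt f m y := by
  rw [Subtype.forall']
  simp only [IsPeriodicPt, IsFixedPt, ← restrictRangeIterate_pow_apply, ← Subtype.ext_iff]
  exact funext_iff

namespace End

lemma pow_add_eq_pow_iff (f : Function.End α) (t m : ℕ) :
    f ^ (t + m) = f ^ t ↔ ∀ y ∈ range f^[t], IsPeriodicPt f m y :=
  iterate_add_eq_iterate_iff f t m

lemma exists_perm_orderOf_eq {r : Function.End α} (hr : IsOfFinOrder r) :
    ∃ e : Equiv.Perm α, orderOf e = orderOf r :=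
  ⟨Equiv.Perm.equivUnitsEnd.symm hr.unit, by
    rw [MulEquiv.orderOf_eq, ← orderOf_units, IsOfFinOrder.val_unit]⟩

end End

end Function

lemma Equiv.Perm.exists_orderOf_eq_of_card_le {β : Type*} [Finite β] (e : Equiv.Perm β) {k : ℕ}
    (hk : Nat.card β ≤ k) : ∃ g : Equiv.Perm (Fin k), orderOf g = orderOf e := by
  have := Fintype.ofFinite β
  obtain ⟨ι⟩ := Function.Embedding.nonempty_of_card_le (α := β) (β := Fin k)
    (by rwa [Fintype.card_fin, ← Nat.card_eq_fintype_card])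
  exact ⟨viaEmbeddingHom ι e, orderOf_injective _ (viaEmbeddingHom_injective ι) e⟩

namespace IsThresholdPeriod

-- `f` is a plain function, so that `f^[n]` is well typed at reducible transparency and rewrites;
-- `(M := Function.End α)` reads it as an element of the transformation monoid.
variable {α : Type*} {f : α → α} {t p : ℕ}

lemma range_iterate_succ_ssubset (h : IsThresholdPeriod (M := Function.End α) f t p) {i : ℕ}
    (hi : i < t) : range f^[i + 1] ⊂ range f^[i] := by
  refine ssubset_iff_subset_ne.2 ⟨range_comp_subset_range _ _, fun hstable => ?_⟩
  have hrange : range f^[t] = range f^[i] := by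
    simpa [Nat.add_sub_cancel' hi.le] using range_iterate_add_eq_of_succ_eq hstable (t - i)
  have hperiodic : ∀ y ∈ range f^[i], IsPeriodicPt f p y :=
    hrange ▸ (Function.End.pow_add_eq_pow_iff f t p).1 h.2.1
  exact absurd (h.2.2.1 i p h.1 ((Function.End.pow_add_eq_pow_iff f i p).2 hperiodic))
    (not_le.2 hi)

lemma add_ncard_range_le [Finite α] (h : IsThresholdPeriod (M := Function.End α) f t p) :
    t + (range f^[t]).ncard ≤ Nat.card α := by
  suffices ∀ i ≤ t, i + (range f^[i]).ncard ≤ Nat.card α from this t le_rfl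
  intro i hi
  induction i with
  | zero => simp [range_id]
  | succ i ih =>
    have := ncard_lt_ncard (h.range_iterate_succ_ssubset hi)
    have := ih (by omega)
    omega

lemma orderOf_restrictRangeIterate (h : IsThresholdPeriod (M := Function.End α) f t p) :
    orderOf (restrictRangeIterate f t) = p := by
  simp only [orderOf_eq_iff h.1, ne_eq, restrictRangeIterate_pow_eq_one_iff,
    ← Function.End.pow_add_eq_pow_iff f t]
  exact ⟨h.2.1, fun m hmp hm hm1 => absurd (h.2.2.2 m hm hm1) (not_le.2 hmp)⟩

theorem exists_perm_fin [Finite α] [Nonempty α]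
    (h : IsThresholdPeriod (M := Function.End α) f t p) :
    t < Nat.card α ∧ ∃ g : Equiv.Perm (Fin (Nat.card α - t)), orderOf g = p := by
  have hcard := h.add_ncard_range_le
  have hpos : 0 < (range f^[t]).ncard := (range_nonempty _).ncard_pos
  refine ⟨by omega, ?_⟩
  obtain ⟨e, he⟩ := Function.End.exists_perm_orderOf_eq
    (orderOf_pos_iff.1 (h.orderOf_restrictRangeIterate ▸ h.1))
  obtain ⟨g, hg⟩ := e.exists_orderOf_eq_of_card_le (k := Nat.card α - t)
    (by rw [Nat.card_coe_set_eq]; omega)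
  exact ⟨g, hg.trans (he.trans h.orderOf_restrictRangeIterate)⟩

end IsThresholdPeriod

namespace Fin

variable {k n : ℕ} (hkn : k ≤ n) (g : Equiv.Perm (Fin k))

/-- `g` permutes the points below `k`, and the points `k, …, n - 1` form a path
`n - 1 ↦ n - 2 ↦ ⋯ ↦ k ↦ k - 1` of length `n - k` that descends into them. -/
def withTail (x : Fin n) : Fin n :=
  if hx : (x : ℕ) < k then castLE hkn (g ⟨x, hx⟩) else ⟨x - 1, by omega⟩

lemma semiconj_castLE_withTail : Semiconj (castLE hkn) g (withTail hkn g) := fun y => by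
  simp [withTail]

lemma withTail_iterate_castLE (m : ℕ) (y : Fin k) :
    (withTail hkn g)^[m] (castLE hkn y) = castLE hkn ((g ^ m) y) :=
  ((semiconj_castLE_withTail hkn g).iterate_right m y).symm

lemma val_withTail_of_le {x : Fin n} (hx : k ≤ x) : (withTail hkn g x : ℕ) = x - 1 := by
  simp [withTail, not_lt.2 hx]

lemma val_withTail_lt_max (hk : 0 < k) (x : Fin n) : (withTail hkn g x : ℕ) < max k x := by
  by_cases hx : (x : ℕ) < k
  · simp [withTail, hx]
  · rw [val_withTail_of_le hkn g (not_lt.1 hx)]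
    omega

lemma val_withTail_iterate_lt (hk : 0 < k) {m : ℕ} {x : Fin n} (hx : x < k + m) :
    ((withTail hkn g)^[m] x : ℕ) < k := by
  induction m generalizing x with
  | zero => exact hx
  | succ m ih =>
    rw [iterate_succ_apply]
    exact ih ((val_withTail_lt_max hkn g hk x).trans_le (by omega))

lemma val_withTail_iterate_of_le {m : ℕ} {x : Fin n} (hx : k + m ≤ x) :
    ((withTail hkn g)^[m] x : ℕ) = x - m := by
  induction m with
  | zero => rfl
  | succ m ih =>
    rw [iterate_succ_apply', val_withTail_of_le hkn g (by omega), ih (by omega)]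
    omega

lemma range_withTail_iterate (hk : 0 < k) :
    range (withTail hkn g)^[n - k] = range (castLE hkn) := by
  refine subset_antisymm ?_ ?_
  · rintro _ ⟨x, rfl⟩
    exact ⟨⟨_, val_withTail_iterate_lt hkn g hk (by omega)⟩, rfl⟩
  · rintro _ ⟨y, rfl⟩
    exact ⟨castLE hkn ((g ^ (n - k))⁻¹ y), by
      rw [withTail_iterate_castLE, Equiv.Perm.inv_def, Equiv.apply_symm_apply]⟩

lemma mk_notMem_periodicPts_withTail (hk : 0 < k) (hkn' : k < n) :
    (⟨k, hkn'⟩ : Fin n) ∉ periodicPts (withTail hkn g) := by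
  intro hmem
  obtain ⟨m, hm, hper⟩ := mem_periodicPts.1 hmem
  have := val_withTail_iterate_lt hkn g hk (m := m) (x := ⟨k, hkn'⟩) (by simpa)
  rw [hper.eq] at this
  exact lt_irrefl _ this

lemma forall_isPeriodicPt_withTail_iff (hk : 0 < k) (p : ℕ) :
    (∀ y ∈ range (withTail hkn g)^[n - k], IsPeriodicPt (withTail hkn g) p y) ↔
      g ^ p = 1 := by
  simp only [range_withTail_iterate hkn g hk, forall_mem_range, IsPeriodicPt, IsFixedPt,
    withTail_iterate_castLE, (castLE_injective hkn).eq_iff, Equiv.ext_iff, Equiv.Perm.one_apply]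

theorem isThresholdPeriod_withTail (hk : 0 < k) :
    IsThresholdPeriod (M := Function.End (Fin n)) (withTail hkn g) (n - k) (orderOf g) := by
  refine ⟨orderOf_pos g, (Function.End.pow_add_eq_pow_iff _ _ _).2
    ((forall_isPeriodicPt_withTail_iff hkn g hk _).2 (pow_orderOf_eq_one g)),
    fun t' p' hp' h => ?_, fun p' hp' h => ?_⟩
  · rcases Nat.eq_zero_or_pos (n - k) with h0 | hpos
    · omega
    have htop : (withTail hkn g)^[n - k - 1] ⟨n - 1, by omega⟩ = ⟨k, by omega⟩ :=
      Fin.ext ((val_withTail_iterate_of_le hkn g (by dsimp only; omega)).trans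
        (by dsimp only; omega))
    have := lt_of_forall_isPeriodicPt hp' ((Function.End.pow_add_eq_pow_iff _ _ _).1 h)
      (htop ▸ mk_notMem_periodicPts_withTail hkn g hk (by omega))
    omega
  · exact Nat.le_of_dvd hp' (orderOf_dvd_of_pow_eq_one
      ((forall_isPeriodicPt_withTail_iff hkn g hk p').1
        ((Function.End.pow_add_eq_pow_iff _ _ _).1 h)))

end Fin

lemma Set.ncard_setOf_fst_mem_and_snd_mem {α β : Type*} (s : Finset α) (S : α → Finset β) :
    {x : α × β | x.1 ∈ s ∧ x.2 ∈ S x.1}.ncard = ∑ a ∈ s, (S a).card := by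
  have : {x : α × β | x.1 ∈ s ∧ x.2 ∈ S x.1} =
      ↑((s.sigma S).map (Equiv.sigmaEquivProd α β).toEmbedding) := by
    ext ⟨a, b⟩
    simp
  rw [this, ncard_coe_finset, Finset.card_map, Finset.card_sigma]

lemma Finset.sum_range_sub_eq_sum_Icc {M : Type*} [AddCommMonoid M] (f : ℕ → M) (n : ℕ) :
    ∑ t ∈ range n, f (n - t) = ∑ k ∈ Icc 1 n, f k :=
  sum_nbij' (n - ·) (n - ·) (by simp; omega) (by simp; omega) (by simp; omega) (by simp; omega)
    (fun _ _ => rfl)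

theorem exists_isThresholdPeriod_iff {n : ℕ} (hn : 1 ≤ n) (t p : ℕ) :
    (∃ f : Function.End (Fin n), IsThresholdPeriod f t p) ↔
      t < n ∧ ∃ g : Equiv.Perm (Fin (n - t)), orderOf g = p := by
  constructor
  · rintro ⟨f, hf⟩
    have : Nonempty (Fin n) := ⟨⟨0, hn⟩⟩
    have h := hf.exists_perm_fin
    rwa [Nat.card_eq_fintype_card, Fintype.card_fin] at h
  · rintro ⟨ht, g, rfl⟩
    have := Fin.isThresholdPeriod_withTail (Nat.sub_le n t) g (by omega)
    rw [Nat.sub_sub_self ht.le] at this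
    exact ⟨_, this⟩

theorem card_threshold_period_pairs (n : ℕ) (hn : 1 ≤ n) :
    Set.ncard {tp : ℕ × ℕ | ∃ f : Function.End (Fin n), IsThresholdPeriod f tp.1 tp.2} =
      ∑ k ∈ Finset.Icc 1 n, numOrders k := by
  have hset : {tp : ℕ × ℕ | ∃ f : Function.End (Fin n), IsThresholdPeriod f tp.1 tp.2} =
      {tp | tp.1 ∈ Finset.range n ∧
        tp.2 ∈ Finset.univ.image fun g : Equiv.Perm (Fin (n - tp.1)) => orderOf g} := by
    ext ⟨t, p⟩
    simp [exists_isThresholdPeriod_iff hn]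
  rw [hset, ← Finset.sum_range_sub_eq_sum_Icc]
  exact Set.ncard_setOf_fst_mem_and_snd_mem _
    fun t => Finset.univ.image fun g : Equiv.Perm (Fin (n - t)) => orderOf g
end

section
/- For n ≥ 0, k ≥ 1, the inverse submonoid of I_{n+k} generated by the partial permutation [1,…,n] ∪ (n+1,…,n+k) is isomorphic to the inverse monoid S_{n,k} presented by ⟨x | x^n x^{-n} = x^{n+1} x^{-(n+1)}, x^n x^{-n} = x^n x^{-n} x^k⟩. -/
/-- The symmetric inverse monoid structure on partial bijections of a set. -/
instance pequivMonoid (α : Type*) : Monoid (PEquiv α α) where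
  mul f g := f.trans g
  one := PEquiv.refl α
  mul_assoc := PEquiv.trans_assoc
  one_mul := PEquiv.refl_trans
  mul_one := PEquiv.trans_refl

/-- `f` is a chain of length `m` (i.e. `m` pairs): there are distinct points
`c 0, …, c m` with `f` mapping `c i ↦ c (i+1)` and nothing else. -/
def IsChainPP {n : ℕ} (f : PEquiv (Fin n) (Fin n)) (m : ℕ) : Prop :=
  ∃ c : Fin (m + 1) → Fin n, Function.Injective c ∧
    ∀ a b : Fin n, f a = some b ↔ ∃ i : Fin m, a = c i.castSucc ∧ b = c i.succ


/-- The partial permutation \`[1,…,a] ∪ (a+1,…,a+b)\` of \`{1,…,a+b}\` (0-indexed): the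
chain \`i ↦ i + 1\` on \`{0,…,a-1}\` together with the cyclic permutation of \`{a,…,a+b-1}\`. -/
def IsChainCycle {a b : ℕ} (f : PEquiv (Fin (a + b)) (Fin (a + b))) : Prop :=
  ∀ i j : Fin (a + b), f i = some j ↔
    ((i.val + 1 < a ∧ j.val = i.val + 1) ∨
      (a ≤ i.val ∧ 0 < b ∧ j.val = a + ((i.val + 1 - a) % b)))


/-- Formal inverse of a word over the alphabet {x, x⁻¹} (with \`true\` ↦ x, \`false\` ↦ x⁻¹). -/
def winv (w : FreeMonoid Bool) : FreeMonoid Bool :=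
  FreeMonoid.ofList ((FreeMonoid.toList w).reverse.map not)

/-- The generator x. -/
def X : FreeMonoid Bool := FreeMonoid.of true

/-- The formal inverse x⁻¹ of the generator. -/
def Xi : FreeMonoid Bool := FreeMonoid.of false

/-- The Vagner relations: \`w w⁻¹ w = w\` and idempotents \`w w⁻¹\` commute. -/
def vagner (u v : FreeMonoid Bool) : Prop :=
  (∃ w, u = w * winv w * w ∧ v = w) ∨
    (∃ w z, u = w * winv w * (z * winv z) ∧ v = z * winv z * (w * winv w))


/-- The congruence defining the inverse monoid presentation
\`⟨x | xⁿx⁻ⁿ = xⁿ⁺¹x⁻⁽ⁿ⁺¹⁾, xⁿx⁻ⁿ = xⁿx⁻ⁿxᵏ⟩\`. -/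
def snkCon (n k : ℕ) : Con (FreeMonoid Bool) :=
  conGen (fun u v => vagner u v ∨
    (u = X ^ n * Xi ^ n ∧ v = X ^ (n + 1) * Xi ^ (n + 1)) ∨
    (u = X ^ n * Xi ^ n ∧ v = X ^ n * Xi ^ n * X ^ k))

/-!
Sending `x ↦ f` and `x⁻¹ ↦ f⁻¹` respects the Vagner relations, which hold in every symmetric
inverse monoid, and both defining relations: `fᵐ f⁻ᵐ` is the identity of the cycle for every
`m ≥ n`, and `fᵏ` fixes the cycle pointwise. So it induces a homomorphism from `S_{n,k}` onto the
inverse submonoid generated by `f`.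

For injectivity, the relations reduce every element of `S_{n,k}` to a normal form: either
`xᵃ x⁻ᵇ xᵗ` with `a, t ≤ b < n`, or `e xʳ` with `e = xⁿ x⁻ⁿ` and `r < k`. Indeed `e` commutes
with `x`, absorbs `x⁻ᵇ` for `b ≥ n` and satisfies `e x⁻¹ = e xᵏ⁻¹`, so `xᵃ x⁻ᵇ xᵗ` with
`b ≥ n` collapses into the cyclic group `{e xʳ}`. Distinct normal forms act differently: on the chain,
`xᵃ x⁻ᵇ xᵗ` is the shift by `a - b + t` with domain `[b - a, n - 1 - a]`, while `e xʳ` is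
undefined on the chain and rotates the cycle by `r`.
-/

namespace PEquiv

variable {α : Type*}

theorem mul_apply (g h : PEquiv α α) (a : α) : (g * h) a = (g a).bind h := rfl

theorem one_apply (a : α) : (1 : PEquiv α α) a = some a := rfl

theorem symm_mul (g h : PEquiv α α) : (g * h).symm = h.symm * g.symm := symm_trans_rev g h

theorem symm_pow (g : PEquiv α α) (m : ℕ) : (g ^ m).symm = g.symm ^ m := by
  induction m with
  | zero => rfl
  | succ m ih => rw [pow_succ, symm_mul, ih, pow_succ']

theorem mul_symm_apply (g : PEquiv α α) (a : α) :
    (g * g.symm) a = if (g a).isSome then some a else none := by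
  rw [mul_apply]
  cases h : g a with
  | none => rfl
  | some b => simpa using (eq_some_iff g).2 h

theorem mul_symm_mul_self (g : PEquiv α α) : g * g.symm * g = g := by
  ext a b
  rw [mul_apply, mul_symm_apply]
  cases h : g a <;> simp [h]

theorem commute_mul_symm (g h : PEquiv α α) : Commute (g * g.symm) (h * h.symm) := by
  refine PEquiv.ext fun a => ?_
  change ((g * g.symm) a).bind (h * h.symm) = ((h * h.symm) a).bind (g * g.symm)
  by_cases hg : (g a).isSome <;> by_cases hh : (h a).isSome <;> simp [hg, hh, mul_symm_apply]

end PEquiv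

theorem winv_mul (u v : FreeMonoid Bool) : winv (u * v) = winv v * winv u := by
  simp [winv]

theorem winv_X_pow (a : ℕ) : winv (X ^ a) = Xi ^ a := by
  induction a with
  | zero => rfl
  | succ a ih => rw [pow_succ, winv_mul, ih, pow_succ']; rfl

theorem winv_Xi_pow (a : ℕ) : winv (Xi ^ a) = X ^ a := by
  induction a with
  | zero => rfl
  | succ a ih => rw [pow_succ, winv_mul, ih, pow_succ']; rfl

section

variable {α : Type*}

def evalWord (g : PEquiv α α) : FreeMonoid Bool →* PEquiv α α :=
  FreeMonoid.lift fun b => if b then g else g.symm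

theorem evalWord_X (g : PEquiv α α) : evalWord g X = g := rfl

theorem evalWord_Xi (g : PEquiv α α) : evalWord g Xi = g.symm := rfl

theorem evalWord_winv (g : PEquiv α α) (w : FreeMonoid Bool) :
    evalWord g (winv w) = (evalWord g w).symm := by
  induction w using FreeMonoid.inductionOn' with
  | one => rfl
  | of_mul b w ih =>
    rw [winv_mul, map_mul, map_mul, PEquiv.symm_mul, ih]
    cases b <;> rfl

theorem evalWord_eq_of_vagner (g : PEquiv α α) {u v : FreeMonoid Bool} (h : vagner u v) :
    evalWord g u = evalWord g v := by
  rcases h with ⟨w, rfl, rfl⟩ | ⟨w, z, rfl, rfl⟩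
  · simp only [map_mul, evalWord_winv, PEquiv.mul_symm_mul_self]
  · simp only [map_mul, evalWord_winv]
    exact PEquiv.commute_mul_symm _ _

theorem mrange_evalWord (g : PEquiv α α) :
    MonoidHom.mrange (evalWord g) = Submonoid.closure {g, g.symm} := by
  rw [evalWord, FreeMonoid.mrange_lift]
  congr 1
  ext h
  simp [eq_comm, or_comm]

end

namespace IsChainCycle

variable {n k : ℕ} {f : PEquiv (Fin (n + k)) (Fin (n + k))}

theorem pow_apply_eq_some_iff (hk : 1 ≤ k) (hf : IsChainCycle f) (a : ℕ) (i j : Fin (n + k)) :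
    (f ^ a) i = some j ↔
      (i + a < n ∧ (j : ℕ) = i + a) ∨ (n ≤ i ∧ (j : ℕ) = n + (i - n + a) % k) := by
  induction a generalizing j with
  | zero =>
    have hmod : ((i : ℕ) - n) % k = i - n := Nat.mod_eq_of_lt (by omega)
    simp only [pow_zero, PEquiv.one_apply, Option.some_inj, Fin.ext_iff, Nat.add_zero, hmod]
    omega
  | succ a ih =>
    have hmod : ((i : ℕ) - n + a) % k < k := Nat.mod_lt _ hk
    have hstep : (n + ((i : ℕ) - n + a) % k + 1 - n) % k = (i - n + (a + 1)) % k := by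
      rw [show n + ((i : ℕ) - n + a) % k + 1 - n = ((i : ℕ) - n + a) % k + 1 by omega,
        Nat.mod_add_mod, Nat.add_assoc]
    rw [pow_succ, PEquiv.mul_apply, Option.bind_eq_some_iff]
    constructor
    · rintro ⟨m, hm, hmj⟩
      rw [ih] at hm
      rw [hf] at hmj
      rcases hm with hm | hm <;> rcases hmj with hmj | ⟨hmj₁, -, hmj₂⟩
      · omega
      · omega
      · omega
      · rw [hmj₂, hm.2, hstep]
        exact Or.inr ⟨hm.1, rfl⟩
    · rintro (h | h)
      · refine ⟨⟨i + a, by omega⟩, (ih _).2 (Or.inl ⟨by omega, rfl⟩), (hf _ _).2 (Or.inl ?_)⟩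
        simp only
        omega
      · refine ⟨⟨n + (i - n + a) % k, by omega⟩, (ih _).2 (Or.inr ⟨h.1, rfl⟩),
          (hf _ _).2 (Or.inr ⟨Nat.le_add_right _ _, hk, ?_⟩)⟩
        simp only
        rw [hstep, h.2]

variable (hk : 1 ≤ k) (hf : IsChainCycle f)
include hk hf

theorem isSome_pow_apply_iff {m : ℕ} (hm : n ≤ m) (i : Fin (n + k)) :
    ((f ^ m) i).isSome ↔ n ≤ i := by
  rw [Option.isSome_iff_exists]
  constructor
  · rintro ⟨j, hj⟩
    rcases (pow_apply_eq_some_iff hk hf m i j).1 hj with h | h <;> omega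
  · intro h
    have hmod := Nat.mod_lt (i - n + m) hk
    exact ⟨⟨n + (i - n + m) % k, by omega⟩,
      (pow_apply_eq_some_iff hk hf m i _).2 (Or.inr ⟨h, rfl⟩)⟩

theorem pow_mul_symm_of_le {m : ℕ} (hm : n ≤ m) : f ^ m * (f ^ m).symm = f ^ n * (f ^ n).symm :=
  PEquiv.ext fun i => by
    rw [PEquiv.mul_symm_apply, PEquiv.mul_symm_apply, Bool.eq_iff_iff.2
      ((isSome_pow_apply_iff hk hf hm i).trans (isSome_pow_apply_iff hk hf le_rfl i).symm)]

theorem pow_k_apply_of_le {i : Fin (n + k)} (hi : n ≤ i) : (f ^ k) i = some i := by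
  rw [pow_apply_eq_some_iff hk hf, Nat.add_mod_right, Nat.mod_eq_of_lt (by omega)]
  omega

theorem pow_mul_symm_mul_pow_k : f ^ n * (f ^ n).symm * f ^ k = f ^ n * (f ^ n).symm :=
  PEquiv.ext fun i => by
    rw [PEquiv.mul_apply, PEquiv.mul_symm_apply]
    split_ifs with h
    · exact pow_k_apply_of_le hk hf ((isSome_pow_apply_iff hk hf le_rfl i).1 h)
    · rfl

theorem snkCon_le_ker : snkCon n k ≤ Con.ker (evalWord f) := by
  refine Con.conGen_le.2 ?_
  rintro u v (h | ⟨rfl, rfl⟩ | ⟨rfl, rfl⟩) <;> rw [Con.ker_rel]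
  · exact evalWord_eq_of_vagner f h
  · simp only [map_mul, map_pow, evalWord_X, evalWord_Xi, ← PEquiv.symm_pow]
    exact (pow_mul_symm_of_le hk hf n.le_succ).symm
  · simp only [map_mul, map_pow, evalWord_X, evalWord_Xi, ← PEquiv.symm_pow]
    exact (pow_mul_symm_mul_pow_k hk hf).symm

theorem pow_mul_symm_pow_mul_pow_apply_eq_some_iff (a b t : ℕ) {i : Fin (n + k)} (hi : i < n)
    (j : Fin (n + k)) : (f ^ a * f.symm ^ b * f ^ t) i = some j ↔
      b ≤ i + a ∧ i + a < n ∧ i + a - b + t < n ∧ (j : ℕ) = i + a - b + t := by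
  simp only [PEquiv.mul_apply, Option.bind_eq_some_iff, ← PEquiv.symm_pow, PEquiv.eq_some_iff,
    pow_apply_eq_some_iff hk hf]
  constructor
  · rintro ⟨m₂, ⟨m₁, h₁, h₂⟩, h₃⟩
    omega
  · rintro ⟨h₁, h₂, h₃, h₄⟩
    refine ⟨⟨i + a - b, by omega⟩, ⟨⟨i + a, by omega⟩, Or.inl ⟨h₂, rfl⟩, Or.inl ⟨?_, ?_⟩⟩,
      Or.inl ⟨?_, ?_⟩⟩ <;> simp only <;> omega

theorem eq_of_pow_mul_symm_pow_mul_pow_eq {a b t a' b' t' : ℕ} (hab : a ≤ b) (htb : t ≤ b)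
    (hbn : b < n) (hab' : a' ≤ b') (htb' : t' ≤ b') (hbn' : b' < n)
    (h : f ^ a * f.symm ^ b * f ^ t = f ^ a' * f.symm ^ b' * f ^ t') :
    a = a' ∧ b = b' ∧ t = t' := by
  have key : ∀ i j : ℕ, i < n → j < n →
      ((b ≤ i + a ∧ i + a < n ∧ i + a - b + t < n ∧ j = i + a - b + t) ↔
        (b' ≤ i + a' ∧ i + a' < n ∧ i + a' - b' + t' < n ∧ j = i + a' - b' + t')) := by
    intro i j hi hj
    rw [← pow_mul_symm_pow_mul_pow_apply_eq_some_iff hk hf a b t (i := ⟨i, by omega⟩) hi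
        ⟨j, by omega⟩, h, pow_mul_symm_pow_mul_pow_apply_eq_some_iff hk hf a' b' t' hi]
  -- Evaluating at the endpoints `b - a`, `n - 1 - a` of the domain on the chain recovers `a, b, t`.
  have := key (b - a) t (by omega) (by omega)
  have := key (b' - a') t' (by omega) (by omega)
  have := key (n - 1 - a) (n - 1 - b + t) (by omega) (by omega)
  have := key (n - 1 - a') (n - 1 - b' + t') (by omega) (by omega)
  omega

theorem pow_mul_symm_pow_mul_pow_ne {a b t : ℕ} (hab : a ≤ b) (htb : t ≤ b) (hbn : b < n)
    (r : ℕ) : f ^ a * f.symm ^ b * f ^ t ≠ f ^ n * f.symm ^ n * f ^ r := by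
  intro h
  have hi : b - a < n := by omega
  have h₁ := (pow_mul_symm_pow_mul_pow_apply_eq_some_iff hk hf a b t (i := ⟨b - a, by omega⟩) hi
    ⟨t, by omega⟩).2 (by simp only; omega)
  rw [h, pow_mul_symm_pow_mul_pow_apply_eq_some_iff hk hf n n r hi] at h₁
  omega

theorem pow_apply_cycle_start (a : ℕ) :
    (f ^ a) ⟨n, Nat.lt_add_of_pos_right hk⟩ =
      some ⟨n + a % k, Nat.add_lt_add_left (Nat.mod_lt a hk) n⟩ :=
  (pow_apply_eq_some_iff hk hf a _ _).2 (Or.inr ⟨le_rfl, by simp⟩)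

theorem pow_mul_symm_pow_mul_pow_apply_cycle_start (r : ℕ) :
    (f ^ n * f.symm ^ n * f ^ r) ⟨n, Nat.lt_add_of_pos_right hk⟩ =
      some ⟨n + r % k, Nat.add_lt_add_left (Nat.mod_lt r hk) n⟩ := by
  have h : (f.symm ^ n) ⟨n + n % k, Nat.add_lt_add_left (Nat.mod_lt n hk) n⟩ =
      some ⟨n, Nat.lt_add_of_pos_right hk⟩ := by
    rw [← PEquiv.symm_pow, PEquiv.eq_some_iff, pow_apply_cycle_start hk hf]
  rw [PEquiv.mul_apply, PEquiv.mul_apply, pow_apply_cycle_start hk hf, Option.bind_some, h,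
    Option.bind_some, pow_apply_cycle_start hk hf]

theorem injOn_pow_mul_symm_pow_mul_pow :
    Set.InjOn (fun r => f ^ n * f.symm ^ n * f ^ r) (Set.Iio k) := by
  intro r hr r' hr' (h : f ^ n * f.symm ^ n * f ^ r = f ^ n * f.symm ^ n * f ^ r')
  have h₁ := pow_mul_symm_pow_mul_pow_apply_cycle_start hk hf r
  rw [h, pow_mul_symm_pow_mul_pow_apply_cycle_start hk hf r', Option.some_inj, Fin.mk.injEq,
    Nat.mod_eq_of_lt (Set.mem_Iio.1 hr), Nat.mod_eq_of_lt (Set.mem_Iio.1 hr')] at h₁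
  omega

end IsChainCycle

namespace SNK

variable (n k : ℕ)

def gen : (snkCon n k).Quotient := (snkCon n k).mk' X

def genInv : (snkCon n k).Quotient := (snkCon n k).mk' Xi

def idem : (snkCon n k).Quotient := gen n k ^ n * genInv n k ^ n

local notation "x" => gen n k
local notation "y" => genInv n k
local notation "e" => idem n k

theorem mk'_eq_of_rel {u v : FreeMonoid Bool}
    (h : vagner u v ∨ (u = X ^ n * Xi ^ n ∧ v = X ^ (n + 1) * Xi ^ (n + 1)) ∨
      (u = X ^ n * Xi ^ n ∧ v = X ^ n * Xi ^ n * X ^ k)) :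
    (snkCon n k).mk' u = (snkCon n k).mk' v :=
  (Con.eq _).2 (ConGen.Rel.of _ _ h)

theorem x_pow_mul_y_pow_mul_x_pow (a : ℕ) : x ^ a * y ^ a * x ^ a = x ^ a := by
  have h := mk'_eq_of_rel n k (Or.inl (Or.inl ⟨X ^ a, rfl, rfl⟩))
  rwa [winv_X_pow, map_mul, map_mul, map_pow, map_pow] at h

theorem y_pow_mul_x_pow_mul_y_pow (a : ℕ) : y ^ a * x ^ a * y ^ a = y ^ a := by
  have h := mk'_eq_of_rel n k (Or.inl (Or.inl ⟨Xi ^ a, rfl, rfl⟩))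
  rwa [winv_Xi_pow, map_mul, map_mul, map_pow, map_pow] at h

theorem commute_x_pow_mul_y_pow (a b : ℕ) : Commute (x ^ a * y ^ a) (y ^ b * x ^ b) := by
  have h := mk'_eq_of_rel n k (Or.inl (Or.inr ⟨X ^ a, Xi ^ b, rfl, rfl⟩))
  simp only [winv_X_pow, winv_Xi_pow, map_mul, map_pow] at h
  exact h

theorem x_pow_succ_mul_y_pow_succ : x ^ (n + 1) * y ^ (n + 1) = e := by
  have h := mk'_eq_of_rel n k (Or.inr (Or.inl ⟨rfl, rfl⟩))
  simp only [map_mul, map_pow] at h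
  exact h.symm

theorem idem_mul_x_pow_k : e * x ^ k = e := by
  have h := mk'_eq_of_rel n k (Or.inr (Or.inr ⟨rfl, rfl⟩))
  simp only [map_mul, map_pow] at h
  exact h.symm

theorem commute_idem_y_pow_mul_x_pow (b : ℕ) : Commute e (y ^ b * x ^ b) :=
  commute_x_pow_mul_y_pow n k n b

theorem x_mul_y_mul_x : x * y * x = x := by
  simpa only [pow_one] using x_pow_mul_y_pow_mul_x_pow n k 1

theorem y_mul_x_mul_y : y * x * y = y := by
  simpa only [pow_one] using y_pow_mul_x_pow_mul_y_pow n k 1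

theorem x_mul_x_pow_mul_y_pow_mul_y (m : ℕ) :
    x * (x ^ m * y ^ m) * y = x ^ (m + 1) * y ^ (m + 1) := by
  rw [pow_succ' (gen n k), pow_succ (genInv n k)]
  simp only [mul_assoc]

theorem x_mul_idem_mul_y : x * e * y = e :=
  (x_mul_x_pow_mul_y_pow_mul_y n k n).trans (x_pow_succ_mul_y_pow_succ n k)

theorem x_pow_mul_y_pow_eq_idem {m : ℕ} (h : n ≤ m) : x ^ m * y ^ m = e := by
  induction m, h using Nat.le_induction with
  | base => rfl
  | succ m _ ih => rw [← x_mul_x_pow_mul_y_pow_mul_y, ih, x_mul_idem_mul_y]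

theorem commute_idem_x : Commute e x := by
  have h : e * (y * x) = y * x * e := by
    simpa only [pow_one] using (commute_idem_y_pow_mul_x_pow n k 1).eq
  calc e * x = x * e * y * x := by rw [x_mul_idem_mul_y]
    _ = x * (e * (y * x)) := by simp only [mul_assoc]
    _ = x * y * x * e := by rw [h]; simp only [mul_assoc]
    _ = x * e := by rw [x_mul_y_mul_x]

theorem idem_mul_x_mul_y : e * (x * y) = e := by
  calc e * (x * y) = x ^ (n + 1) * (y ^ n * (y * x * y)) := by
        rw [← x_pow_succ_mul_y_pow_succ, pow_succ (genInv n k) n]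
        simp only [mul_assoc]
    _ = e := by rw [y_mul_x_mul_y, ← pow_succ, x_pow_succ_mul_y_pow_succ]

theorem idem_mul_x_pow_mod (j : ℕ) : e * x ^ j = e * x ^ (j % k) := by
  have hkq : ∀ q, e * x ^ (k * q) = e := by
    intro q
    induction q with
    | zero => simp
    | succ q ih => rw [Nat.mul_succ, pow_add, ← mul_assoc, ih, idem_mul_x_pow_k]
  calc e * x ^ j = e * x ^ (k * (j / k)) * x ^ (j % k) := by
        rw [mul_assoc, ← pow_add, Nat.div_add_mod]
    _ = e * x ^ (j % k) := by rw [hkq]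

theorem idem_mul_x_pow_mul_y (hk : 1 ≤ k) (r : ℕ) : e * x ^ r * y = e * x ^ (r + (k - 1)) := by
  have hc : ∀ m, e * x ^ m = x ^ m * e := fun m => ((commute_idem_x n k).pow_right m).eq
  have hkx : e * x ^ (k - 1) * x = e := by
    rw [mul_assoc, ← pow_succ, Nat.sub_add_cancel hk, idem_mul_x_pow_k]
  calc e * x ^ r * y = x ^ r * (e * x ^ (k - 1) * x * y) := by rw [hc, mul_assoc, hkx]
    _ = x ^ r * x ^ (k - 1) * (e * (x * y)) := by rw [hc]; simp only [mul_assoc]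
    _ = e * x ^ (r + (k - 1)) := by rw [idem_mul_x_mul_y, ← pow_add, hc]

theorem idem_mul_y_pow (hk : 1 ≤ k) (b : ℕ) : e * y ^ b = e * x ^ ((k - 1) * b) := by
  induction b with
  | zero => simp
  | succ b ih =>
    rw [pow_succ, ← mul_assoc, ih, idem_mul_x_pow_mul_y n k hk, Nat.mul_succ]

theorem x_pow_mul_idem_mul_y_pow : x ^ n * e * y ^ n = e :=
  calc x ^ n * e * y ^ n = x ^ (n + n) * y ^ (n + n) := by
        rw [idem, pow_add, pow_add]
        simp only [mul_assoc]
    _ = e := x_pow_mul_y_pow_eq_idem n k (Nat.le_add_left n n)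

theorem idem_mul_y_pow_mul_x_pow : e * (y ^ n * x ^ n) = y ^ n * x ^ n := by
  have hqq : y ^ n * x ^ n * (y ^ n * x ^ n) = y ^ n * x ^ n := by
    rw [← mul_assoc, y_pow_mul_x_pow_mul_y_pow]
  calc e * (y ^ n * x ^ n) = e * (y ^ n * x ^ n * (y ^ n * x ^ n)) := by rw [hqq]
    _ = y ^ n * x ^ n * e * (y ^ n * x ^ n) := by
        rw [← mul_assoc, (commute_idem_y_pow_mul_x_pow n k n).eq]
    _ = y ^ n * (x ^ n * e * y ^ n) * x ^ n := by simp only [mul_assoc]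
    _ = y ^ n * x ^ n := by
        rw [x_pow_mul_idem_mul_y_pow, idem, ← hqq]
        simp only [mul_assoc]

theorem idem_mul_y_pow_of_le {b : ℕ} (h : n ≤ b) : e * y ^ b = y ^ b := by
  obtain ⟨c, rfl⟩ := Nat.exists_eq_add_of_le h
  calc e * y ^ (n + c) = e * (y ^ n * x ^ n * y ^ n) * y ^ c := by
        rw [y_pow_mul_x_pow_mul_y_pow, pow_add, mul_assoc]
    _ = e * (y ^ n * x ^ n) * y ^ n * y ^ c := by simp only [mul_assoc]
    _ = y ^ (n + c) := by rw [idem_mul_y_pow_mul_x_pow, y_pow_mul_x_pow_mul_y_pow, pow_add]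

theorem x_pow_mul_y_pow_mul_x_pow_eq_idem_mul (hk : 1 ≤ k) (a t : ℕ) {b : ℕ} (hb : n ≤ b) :
    x ^ a * y ^ b * x ^ t = e * x ^ ((a + (k - 1) * b + t) % k) := by
  calc x ^ a * y ^ b * x ^ t = x ^ a * e * x ^ ((k - 1) * b) * x ^ t := by
        rw [← idem_mul_y_pow_of_le n k hb, idem_mul_y_pow n k hk]
        simp only [mul_assoc]
    _ = e * x ^ (a + (k - 1) * b + t) := by
        rw [← ((commute_idem_x n k).pow_right a).eq, pow_add, pow_add]
        simp only [mul_assoc]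
    _ = e * x ^ ((a + (k - 1) * b + t) % k) := idem_mul_x_pow_mod n k _

theorem x_pow_mul_y_pow_mul_x_pow_mul_x (a b : ℕ) :
    x ^ a * y ^ b * x ^ b * x = x ^ (a + 1) * y ^ (b + 1) * x ^ (b + 1) := by
  have hc : x * y * (y ^ b * x ^ b) = y ^ b * x ^ b * (x * y) := by
    simpa only [pow_one] using (commute_x_pow_mul_y_pow n k 1 b).eq
  symm
  calc x ^ (a + 1) * y ^ (b + 1) * x ^ (b + 1) = x ^ a * (x * y * (y ^ b * x ^ b)) * x := by
        rw [pow_succ (gen n k) a, pow_succ' (genInv n k) b, pow_succ (gen n k) b]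
        simp only [mul_assoc]
    _ = x ^ a * y ^ b * x ^ b * (x * y * x) := by rw [hc]; simp only [mul_assoc]
    _ = x ^ a * y ^ b * x ^ b * x := by rw [x_mul_y_mul_x]

theorem y_pow_mul_x_pow_succ_mul_y {b t : ℕ} (h : t < b) :
    y ^ b * x ^ (t + 1) * y = y ^ b * x ^ t := by
  have hc : x * y * (y ^ t * x ^ t) = y ^ t * x ^ t * (x * y) := by
    simpa only [pow_one] using (commute_x_pow_mul_y_pow n k 1 t).eq
  obtain ⟨c, rfl⟩ := Nat.exists_eq_add_of_lt h
  rw [show t + c + 1 = c + 1 + t by omega, pow_add (genInv n k) (c + 1), pow_succ (genInv n k) c]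
  calc y ^ c * y * y ^ t * x ^ (t + 1) * y = y ^ c * y * (y ^ t * x ^ t * (x * y)) := by
        rw [pow_succ (gen n k) t]
        simp only [mul_assoc]
    _ = y ^ c * (y * x * y) * (y ^ t * x ^ t) := by rw [← hc]; simp only [mul_assoc]
    _ = y ^ c * y * y ^ t * x ^ t := by rw [y_mul_x_mul_y]; simp only [mul_assoc]

def IsNormalForm (m : (snkCon n k).Quotient) : Prop :=
  (∃ a b t, a ≤ b ∧ t ≤ b ∧ b < n ∧ m = x ^ a * y ^ b * x ^ t) ∨ ∃ r < k, m = e * x ^ r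

variable {n k}

theorem isNormalForm_idem_mul_x_pow (hk : 1 ≤ k) (j : ℕ) : IsNormalForm n k (e * x ^ j) :=
  Or.inr ⟨j % k, Nat.mod_lt j hk, idem_mul_x_pow_mod n k j⟩

theorem isNormalForm_x_pow_mul_y_pow_mul_x_pow (hk : 1 ≤ k) {a b t : ℕ} (hab : a ≤ b)
    (htb : t ≤ b) : IsNormalForm n k (x ^ a * y ^ b * x ^ t) := by
  rcases lt_or_ge b n with hbn | hbn
  · exact Or.inl ⟨a, b, t, hab, htb, hbn, rfl⟩
  · rw [x_pow_mul_y_pow_mul_x_pow_eq_idem_mul n k hk a t hbn]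
    exact isNormalForm_idem_mul_x_pow hk _

theorem IsNormalForm.mul_x (hk : 1 ≤ k) {m : (snkCon n k).Quotient} (h : IsNormalForm n k m) :
    IsNormalForm n k (m * x) := by
  rcases h with ⟨a, b, t, hab, htb, -, rfl⟩ | ⟨r, -, rfl⟩
  · rcases htb.lt_or_eq with htb | rfl
    · rw [mul_assoc, ← pow_succ]
      exact isNormalForm_x_pow_mul_y_pow_mul_x_pow hk hab htb
    · rw [x_pow_mul_y_pow_mul_x_pow_mul_x]
      exact isNormalForm_x_pow_mul_y_pow_mul_x_pow hk (Nat.succ_le_succ hab) le_rfl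
  · rw [mul_assoc, ← pow_succ]
    exact isNormalForm_idem_mul_x_pow hk _

theorem IsNormalForm.mul_y (hk : 1 ≤ k) {m : (snkCon n k).Quotient} (h : IsNormalForm n k m) :
    IsNormalForm n k (m * y) := by
  rcases h with ⟨a, b, t, hab, htb, -, rfl⟩ | ⟨r, -, rfl⟩
  · cases t with
    | zero =>
      simpa only [pow_zero, mul_one, pow_succ, mul_assoc] using
        isNormalForm_x_pow_mul_y_pow_mul_x_pow (n := n) hk (hab.trans b.le_succ) b.succ.zero_le
    | succ t =>
      rw [mul_assoc (x ^ a), mul_assoc (x ^ a), y_pow_mul_x_pow_succ_mul_y n k htb, ← mul_assoc]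
      exact isNormalForm_x_pow_mul_y_pow_mul_x_pow hk hab (Nat.le_of_succ_le htb)
  · rw [idem_mul_x_pow_mul_y n k hk]
    exact isNormalForm_idem_mul_x_pow hk _

theorem isNormalForm (hk : 1 ≤ k) (m : (snkCon n k).Quotient) : IsNormalForm n k m := by
  obtain ⟨w, rfl⟩ := (snkCon n k).mk'_surjective m
  obtain ⟨l, rfl⟩ := FreeMonoid.ofList.surjective w
  induction l using List.reverseRecOn with
  | nil => simpa using isNormalForm_x_pow_mul_y_pow_mul_x_pow (n := n) (a := 0) hk le_rfl le_rfl
  | append_singleton l b ih =>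
    rw [FreeMonoid.ofList_append, FreeMonoid.ofList_singleton, map_mul]
    cases b
    · exact ih.mul_y hk
    · exact ih.mul_x hk

theorem lift_evalWord_x_pow_mul_y_pow_mul_x_pow {α : Type*} {f : PEquiv α α}
    (H : snkCon n k ≤ Con.ker (evalWord f)) (a b t : ℕ) :
    (snkCon n k).lift (evalWord f) H (x ^ a * y ^ b * x ^ t) = f ^ a * f.symm ^ b * f ^ t := by
  simp only [map_mul, map_pow, gen, genInv, Con.lift_mk', evalWord_X, evalWord_Xi]

theorem injective_lift_evalWord {f : PEquiv (Fin (n + k)) (Fin (n + k))} (hk : 1 ≤ k)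
    (hf : IsChainCycle f) :
    Function.Injective ((snkCon n k).lift (evalWord f) (hf.snkCon_le_ker hk)) := by
  intro m m' h
  rcases isNormalForm hk m with ⟨a, b, t, hab, htb, hbn, rfl⟩ | ⟨r, hr, rfl⟩ <;>
    rcases isNormalForm hk m' with ⟨a', b', t', hab', htb', hbn', rfl⟩ | ⟨r', hr', rfl⟩ <;>
    simp only [idem, lift_evalWord_x_pow_mul_y_pow_mul_x_pow] at h
  · obtain ⟨rfl, rfl, rfl⟩ := hf.eq_of_pow_mul_symm_pow_mul_pow_eq hk hab htb hbn hab' htb' hbn' h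
    rfl
  · exact absurd h (hf.pow_mul_symm_pow_mul_pow_ne hk hab htb hbn r')
  · exact absurd h.symm (hf.pow_mul_symm_pow_mul_pow_ne hk hab' htb' hbn' r)
  · rw [hf.injOn_pow_mul_symm_pow_mul_pow hk hr hr' h]

end SNK

theorem snk_presentation_iso (n k : ℕ) (hk : 1 ≤ k)
    (f : PEquiv (Fin (n + k)) (Fin (n + k))) (hf : IsChainCycle f) :
    Nonempty ((snkCon n k).Quotient ≃*
      (Submonoid.closure {f, f.symm} : Submonoid (PEquiv (Fin (n + k)) (Fin (n + k))))) := by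
  set φ := (snkCon n k).lift (evalWord f) (hf.snkCon_le_ker hk)
  have hrange : MonoidHom.mrange φ = Submonoid.closure {f, f.symm} := by
    rw [Con.lift_range, mrange_evalWord]
  have hinj : Function.Injective φ.mrangeRestrict := fun m m' h =>
    SNK.injective_lift_evalWord hk hf (congrArg Subtype.val h)
  exact ⟨(MulEquiv.ofBijective φ.mrangeRestrict ⟨hinj, φ.mrangeRestrict_surjective⟩).trans
    (MulEquiv.submonoidCongr hrange)⟩
end
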